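/- arXiv:2406.14132 — 6 statements merged into one kernel-verified Lean document; each statement's English description precedes it below -/
import Mathlib

section
/- Let ω₀, ω₁ ∈ ℝ with ω₀ ≥ 0 and ω₁ ≥ 0, and let f(x) = -ω₀/2 + ω₀/(1 + exp(-ω₁·x)). Then f is convex on the interval (-∞, 0], i.e. ConvexOn ℝ (Set.Iic 0) f. -/
open Real Set

lemma monotoneOn_mul_one_sub_Iic_half : MonotoneOn (fun p : ℝ => p * (1 - p)) (Iic 2⁻¹) := by
  intro p hp q hq hpq
  simp only [mem_Iic] at hp hq
  nlinarith

lemma Real.sigmoid_le_half_of_nonpos {x : ℝ} (hx : x ≤ 0) : sigmoid x ≤ 2⁻¹ :=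
  sigmoid_zero ▸ sigmoid_le hx

/-- The sigmoid's derivative `σ (1 - σ)` increases as long as `σ ≤ 1/2`, i.e. on `(-∞, 0]`. -/
lemma Real.convexOn_sigmoid_Iic : ConvexOn ℝ (Iic 0) sigmoid := by
  refine MonotoneOn.convexOn_of_deriv (convex_Iic 0) continuous_sigmoid.continuousOn
    differentiable_sigmoid.differentiableOn ?_
  rw [deriv_sigmoid, interior_Iic]
  intro x hx y hy hxy
  exact monotoneOn_mul_one_sub_Iic_half (sigmoid_le_half_of_nonpos (le_of_lt hx))
    (sigmoid_le_half_of_nonpos (le_of_lt hy)) (sigmoid_le hxy)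

lemma ConvexOn.comp_mul_left_Iic {g : ℝ → ℝ} (hg : ConvexOn ℝ (Iic 0) g) {c : ℝ} (hc : 0 ≤ c) :
    ConvexOn ℝ (Iic 0) (fun x => g (c * x)) :=
  (hg.comp_linearMap (LinearMap.mulLeft ℝ c)).subset
    (fun _ hx => mul_nonpos_of_nonneg_of_nonpos hc hx) (convex_Iic 0)

/-- For `ω₀ ≥ 0`, `ω₁ ≥ 0`, the CLU sigmoid branch
`f(x) = -ω₀/2 + ω₀/(1 + exp(-ω₁·x))` is convex on `(-∞, 0]`. -/
theorem clu_sigmoid_convexOn_Iic (ω₀ ω₁ : ℝ) (h₀ : 0 ≤ ω₀) (h₁ : 0 ≤ ω₁)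
    (f : ℝ → ℝ)
    (hf : ∀ x, f x = -ω₀ / 2 + ω₀ / (1 + Real.exp (-ω₁ * x))) :
    ConvexOn ℝ (Set.Iic (0 : ℝ)) f := by
  have hf_eq : f = fun x => ω₀ • sigmoid (ω₁ * x) + -ω₀ / 2 := by
    funext x
    rw [hf x, sigmoid_def, smul_eq_mul, div_eq_mul_inv ω₀, neg_mul, add_comm]
  rw [hf_eq]
  exact ((convexOn_sigmoid_Iic.comp_mul_left_Iic h₁).smul h₀).add_const _
end

section
/- Let ω₀, ω₁ ∈ ℝ with ω₀ > 0, ω₁ > 0, and ω₀·ω₁ ≤ 4, and let ρ̆ : ℝ → ℝ be the CLU activation: ρ̆(x) = -ω₀/2 + ω₀/(1 + exp(-ω₁·x)) if x < 0 and ρ̆(x) = x if x ≥ 0. Then ρ̆ is convex on all of ℝ, i.e. ConvexOn ℝ Set.univ ρ̆. -/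
/-!
Writing `g x = -ω₀/2 + ω₀ σ(ω₁ x)` with the logistic sigmoid `σ`, we have `ρ - id = g - id` on
`(-∞, 0]` and `ρ - id = 0` on `[0, ∞)`. The left piece is convex, because `σ' = σ (1 - σ)` increases
while `σ ≤ 1/2`, and nonincreasing, because its derivative `ω₀ ω₁ σ (1 - σ) - 1` is at most
`ω₀ ω₁ / 4 - 1 ≤ 0`. Gluing a nonincreasing convex function to a nondecreasing one at a common value
gives a convex function, and adding back `id` keeps it convex.
-/

open Real Set

theorem convexOn_univ_piecewise_Iic_id {𝕜 : Type*} [Field 𝕜] [LinearOrder 𝕜]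
    [IsStrictOrderedRing 𝕜] {e : 𝕜} {f : 𝕜 → 𝕜} (hf : ConvexOn 𝕜 (Iic e) f)
    (h_anti : AntitoneOn (f - id) (Iic e)) (h_eq : f e = e) :
    ConvexOn 𝕜 univ ((Iic e).piecewise f id) := by
  have h_split : (Iic e).piecewise f id = (Iic e).piecewise (f - id) (fun _ => 0) + id := by
    ext x
    by_cases hx : x ∈ Iic e <;> simp [Set.piecewise, hx]
  rw [h_split]
  refine .add ?_ (convexOn_id convex_univ)
  exact convexOn_univ_piecewise_Iic_of_antitoneOn_Iic_monotoneOn_Ici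
    (hf.sub (concaveOn_id (convex_Iic e))) (convexOn_const 0 (convex_Ici e)) h_anti
    monotoneOn_const (by simp [h_eq])

namespace Real

lemma sigmoid_mul_one_sub_sigmoid_le (x : ℝ) : sigmoid x * (1 - sigmoid x) ≤ 4⁻¹ := by
  nlinarith [sq_nonneg (sigmoid x - 2⁻¹)]

lemma sigmoid_le_half {x : ℝ} (hx : x ≤ 0) : sigmoid x ≤ 2⁻¹ :=
  sigmoid_zero ▸ sigmoid_le hx

lemma convexOn_sigmoid_Iic_s5 : ConvexOn ℝ (Iic 0) sigmoid := by
  refine MonotoneOn.convexOn_of_deriv (convex_Iic 0) continuous_sigmoid.continuousOn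
    differentiable_sigmoid.differentiableOn ?_
  rw [deriv_sigmoid, interior_Iic]
  intro a _ b hb hab
  have hσ := sigmoid_le hab
  have hσb := sigmoid_le_half (mem_Iio.1 hb).le
  nlinarith

end Real

noncomputable def cluBranch (ω₀ ω₁ x : ℝ) : ℝ := -ω₀ / 2 + ω₀ * sigmoid (ω₁ * x)

section

variable {ω₀ ω₁ : ℝ}

lemma cluBranch_zero : cluBranch ω₀ ω₁ 0 = 0 := by
  simp [cluBranch, sigmoid_zero]
  ring

lemma hasDerivAt_cluBranch (x : ℝ) :
    HasDerivAt (cluBranch ω₀ ω₁)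
      (ω₀ * ω₁ * (sigmoid (ω₁ * x) * (1 - sigmoid (ω₁ * x)))) x := by
  have := (((hasDerivAt_sigmoid (ω₁ * x)).comp x ((hasDerivAt_id x).const_mul ω₁)).const_mul
    ω₀).const_add (-ω₀ / 2)
  exact this.congr_deriv (by ring)

lemma convexOn_cluBranch (h₀ : 0 ≤ ω₀) (h₁ : 0 < ω₁) :
    ConvexOn ℝ (Iic 0) (cluBranch ω₀ ω₁) := by
  have := ((convexOn_sigmoid_Iic_s5.comp_linearMap (LinearMap.mul ℝ ℝ ω₁)).smul h₀).add_const
    (-ω₀ / 2)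
  have hpre : ⇑(LinearMap.mul ℝ ℝ ω₁) ⁻¹' Iic 0 = Iic 0 := by
    change (ω₁ * ·) ⁻¹' Iic 0 = Iic 0
    rw [preimage_const_mul_Iic₀ 0 h₁, zero_div]
  rw [hpre] at this
  exact this.congr fun x _ => add_comm _ _

lemma antitone_cluBranch_sub_id (h₄ : ω₀ * ω₁ ≤ 4) : Antitone (cluBranch ω₀ ω₁ - id) := by
  have hderiv (x : ℝ) : HasDerivAt (cluBranch ω₀ ω₁ - id)
      (ω₀ * ω₁ * (sigmoid (ω₁ * x) * (1 - sigmoid (ω₁ * x))) - 1) x :=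
    (hasDerivAt_cluBranch x).sub (hasDerivAt_id x)
  refine antitone_of_deriv_nonpos (fun x => (hderiv x).differentiableAt) fun x => ?_
  rw [(hderiv x).deriv]
  have h_le := sigmoid_mul_one_sub_sigmoid_le (ω₁ * x)
  have h_nonneg : 0 ≤ sigmoid (ω₁ * x) * (1 - sigmoid (ω₁ * x)) :=
    mul_nonneg (sigmoid_nonneg _) (sub_nonneg.2 (sigmoid_le_one _))
  nlinarith

end

/-- For `ω₀ > 0`, `ω₁ > 0` with `ω₀·ω₁ ≤ 4`, the CLU activation is convex on all
of `ℝ`. -/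
theorem clu_convexOn_univ (ω₀ ω₁ : ℝ) (h₀ : 0 < ω₀) (h₁ : 0 < ω₁)
    (h₄ : ω₀ * ω₁ ≤ 4)
    (ρ : ℝ → ℝ)
    (hρ : ∀ x, ρ x =
      if x < 0 then -ω₀ / 2 + ω₀ / (1 + Real.exp (-ω₁ * x)) else x) :
    ConvexOn ℝ Set.univ ρ := by
  have hρ_eq : ρ = (Iic 0).piecewise (cluBranch ω₀ ω₁) id := by
    funext x
    rw [hρ x]
    rcases lt_trichotomy x 0 with hx | rfl | hx
    · simp [hx, hx.le, cluBranch, sigmoid_def, div_eq_mul_inv]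
    · simp [cluBranch_zero]
    · simp [hx.not_gt, hx.not_ge]
  rw [hρ_eq]
  exact convexOn_univ_piecewise_Iic_id (convexOn_cluBranch h₀.le h₁)
    ((antitone_cluBranch_sub_id h₄).antitoneOn _) cluBranch_zero
end

section
/- Let ρ̆ : ℝ → ℝ be monotone nondecreasing, let c ∈ ℝ satisfy c < ρ̆(1) and suppose ρ̆(x) tends to c as x → -∞. Define ρ̃(x) = ρ̆(x+1) - ρ̆(1) if x < 0 and ρ̃(x) = -ρ̆(-(x-1)) + ρ̆(1) if x ≥ 0, and define ρ̃_H(x) = (ρ̃(x) - c + ρ̆(1)) / (2·(ρ̆(1) - c)). Then for every x > 0, the function a ↦ ρ̃_H(a·x) tends to 1 as a → +∞, and for every x < 0, the function a ↦ ρ̃_H(a·x) tends to 0 as a → +∞; i.e., ρ̃_H(a·x) converges pointwise (for x ≠ 0) to the Heaviside function H(x) as a → ∞. -/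
/-!
The saturated function `ρ̃` glues the left tail of `ρ̆` (shifted so that it vanishes at `0⁻`)
to its point reflection, so `ρ̃ → c - ρ̆(1)` at `-∞` and `ρ̃ → ρ̆(1) - c` at `+∞`. The affine
rescaling `ρ̃_H` sends these two limits to `0` and `1`, and `a ↦ a x` runs off to `±∞`
according to the sign of `x`.
-/

open Filter Topology

noncomputable def saturate (ρ : ℝ → ℝ) (x : ℝ) : ℝ :=
  if x < 0 then ρ (x + 1) - ρ 1 else -ρ (-(x - 1)) + ρ 1

section

variable {ρ : ℝ → ℝ} {c : ℝ}

theorem tendsto_saturate_atBot (hlim : Tendsto ρ atBot (𝓝 c)) :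
    Tendsto (saturate ρ) atBot (𝓝 (c - ρ 1)) := by
  have hshift : Tendsto (fun x => ρ (x + 1) - ρ 1) atBot (𝓝 (c - ρ 1)) :=
    (hlim.comp (tendsto_atBot_add_const_right _ 1 tendsto_id)).sub_const _
  refine hshift.congr' ?_
  filter_upwards [eventually_lt_atBot 0] with x hx
  simp only [saturate, if_pos hx]

theorem tendsto_saturate_atTop (hlim : Tendsto ρ atBot (𝓝 c)) :
    Tendsto (saturate ρ) atTop (𝓝 (ρ 1 - c)) := by
  have hreflect : Tendsto (fun x : ℝ => -(x - 1)) atTop atBot :=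
    tendsto_neg_atTop_atBot.comp (tendsto_atTop_add_const_right _ (-1) tendsto_id)
  have hreflected : Tendsto (fun x => -ρ (-(x - 1)) + ρ 1) atTop (𝓝 (ρ 1 - c)) := by
    simpa only [Function.comp_def, neg_add_eq_sub] using (hlim.comp hreflect).neg.add_const (ρ 1)
  refine hreflected.congr' ?_
  filter_upwards [eventually_ge_atTop 0] with x hx
  simp only [saturate, if_neg (not_lt.mpr hx)]

end

theorem saturated_heaviside_limit_general (ρ : ℝ → ℝ)
    (c : ℝ) (hc : c < ρ 1) (hlim : Tendsto ρ atBot (nhds c))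
    (ρtilde : ℝ → ℝ)
    (hρtilde : ∀ x, ρtilde x =
      if x < 0 then ρ (x + 1) - ρ 1 else -ρ (-(x - 1)) + ρ 1)
    (ρH : ℝ → ℝ)
    (hρH : ∀ x, ρH x = (ρtilde x - c + ρ 1) / (2 * (ρ 1 - c))) :
    (∀ x : ℝ, 0 < x → Tendsto (fun a : ℝ => ρH (a * x)) atTop (nhds 1)) ∧
      (∀ x : ℝ, x < 0 → Tendsto (fun a : ℝ => ρH (a * x)) atTop (nhds 0)) := by
  have hρH' : ρH = fun x => (saturate ρ x + (ρ 1 - c)) / (2 * (ρ 1 - c)) := by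
    funext x
    rw [hρH, hρtilde, saturate]
    ring
  have hd : 2 * (ρ 1 - c) ≠ 0 := by linarith
  have htop : Tendsto ρH atTop (𝓝 1) := by
    have := ((tendsto_saturate_atTop hlim).add_const (ρ 1 - c)).div_const (2 * (ρ 1 - c))
    rwa [← hρH', ← two_mul, div_self hd] at this
  have hbot : Tendsto ρH atBot (𝓝 0) := by
    have := ((tendsto_saturate_atBot hlim).add_const (ρ 1 - c)).div_const (2 * (ρ 1 - c))
    rwa [← hρH', sub_add_sub_cancel, sub_self, zero_div] at this
  exact ⟨fun x hx => htop.comp (tendsto_id.atTop_mul_const hx),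
    fun x hx => hbot.comp (tendsto_id.atTop_mul_const_of_neg hx)⟩

/-- The rescaled saturated activation `ρ̃_H(x) = (ρ̃(x) - c + ρ̆(1))/(2·(ρ̆(1) - c))`
converges pointwise (for `x ≠ 0`) to the Heaviside function:
`ρ̃_H(a·x) → 1` as `a → ∞` for `x > 0`, and `ρ̃_H(a·x) → 0` as `a → ∞` for
`x < 0`. -/
theorem saturated_heaviside_limit (ρ : ℝ → ℝ) (hmono : Monotone ρ)
    (c : ℝ) (hc : c < ρ 1) (hlim : Tendsto ρ atBot (nhds c))
    (ρtilde : ℝ → ℝ)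
    (hρtilde : ∀ x, ρtilde x =
      if x < 0 then ρ (x + 1) - ρ 1 else -ρ (-(x - 1)) + ρ 1)
    (ρH : ℝ → ℝ)
    (hρH : ∀ x, ρH x = (ρtilde x - c + ρ 1) / (2 * (ρ 1 - c))) :
    (∀ x : ℝ, 0 < x → Tendsto (fun a : ℝ => ρH (a * x)) atTop (nhds 1)) ∧
      (∀ x : ℝ, x < 0 → Tendsto (fun a : ℝ => ρH (a * x)) atTop (nhds 0)) :=
  saturated_heaviside_limit_general ρ c hc hlim ρtilde hρtilde ρH hρH
end

section
/- Let m, n : ℕ, let W : Matrix (Fin m) (Fin n) ℝ, t : Fin n → ℤ, and b : Fin m → ℝ. Define (|W|_t) j i = |W j i| if t i = 1, -(|W j i|) if t i = -1, and W j i otherwise, and define h : (Fin n → ℝ) → (Fin m → ℝ) by h(x) = (|W|_t).mulVec x + b. If x, x' : Fin n → ℝ satisfy x i ≤ x' i for every i with t i = 1, x i ≥ x' i for every i with t i = -1, and x i = x' i for every i with t i ≠ 1 and t i ≠ -1, then h(x) j ≤ h(x') j for every j : Fin m. -/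
/-- The constrained linear layer `h(x) = |W|_t · x + b` is nondecreasing in every
input coordinate with indicator `1` and nonincreasing in every coordinate with
indicator `-1`. -/
theorem constrained_layer_monotone (m n : ℕ)
    (W : Matrix (Fin m) (Fin n) ℝ) (t : Fin n → ℤ) (b : Fin m → ℝ)
    (Wt : Matrix (Fin m) (Fin n) ℝ)
    (hWt : ∀ (j : Fin m) (i : Fin n),
      Wt j i =
        if t i = 1 then |W j i| else if t i = -1 then -|W j i| else W j i)
    (h : (Fin n → ℝ) → Fin m → ℝ)
    (hh : ∀ x, h x = Wt.mulVec x + b)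
    (x x' : Fin n → ℝ)
    (hx1 : ∀ i, t i = 1 → x i ≤ x' i)
    (hx2 : ∀ i, t i = -1 → x' i ≤ x i)
    (hx0 : ∀ i, t i ≠ 1 → t i ≠ -1 → x i = x' i) :
    ∀ j : Fin m, h x j ≤ h x' j := by
  intro j
  simp only [hh, Pi.add_apply, add_le_add_iff_right, Matrix.mulVec, dotProduct]
  apply Finset.sum_le_sum
  intro i _
  rw [hWt]
  by_cases h1 : t i = 1
  · simp only [h1, if_pos rfl]
    exact mul_le_mul_of_nonneg_left (hx1 i h1) (abs_nonneg _)
  · by_cases h2 : t i = -1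
    · rw [if_neg h1, if_pos h2]
      have := hx2 i h2
      nlinarith [abs_nonneg (W j i)]
    · simp [if_neg h1, if_neg h2, hx0 i h1 h2]
end

section
/- Let a < b be reals, let f : ℝ → ℝ be continuous on [a, b] and monotone nondecreasing on [a, b], and let ε > 0. Then there exist N : ℕ, a constant c₀ ∈ ℝ, nonnegative coefficients c : Fin N → ℝ (c i ≥ 0 for all i), and thresholds t : Fin N → ℝ, such that for every x ∈ [a, b], |f(x) - (c₀ + ∑ i, c i · (if t i ≤ x then (1:ℝ) else 0))| < ε. That is, f is uniformly approximated on [a, b] by a constant plus a nonnegative combination of Heaviside step functions H(x - t i). -/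
open Finset

/-- A continuous monotone nondecreasing function on `[a, b]` is uniformly
approximated within `ε` by a constant plus a nonnegative combination of Heaviside
step functions. -/
theorem monotone_step_approx (a b : ℝ) (hab : a < b) (f : ℝ → ℝ)
    (hf_cont : ContinuousOn f (Set.Icc a b))
    (hf_mono : MonotoneOn f (Set.Icc a b))
    (ε : ℝ) (hε : 0 < ε) :
    ∃ (N : ℕ) (c₀ : ℝ) (c : Fin N → ℝ) (t : Fin N → ℝ),
      (∀ i, 0 ≤ c i) ∧
      ∀ x ∈ Set.Icc a b,
        |f x - (c₀ + ∑ i, c i * (if t i ≤ x then (1 : ℝ) else 0))| < ε := by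
  have hcpt : IsCompact (Set.Icc a b) := isCompact_Icc
  have huc : UniformContinuousOn f (Set.Icc a b) :=
    hcpt.uniformContinuousOn_of_continuous hf_cont
  rw [Metric.uniformContinuousOn_iff] at huc
  obtain ⟨δ, hδ, hδf⟩ := huc ε hε
  obtain ⟨N, hN⟩ := exists_nat_gt ((b - a) / δ)
  have hba : (0:ℝ) < b - a := sub_pos.mpr hab
  have hN0 : (0:ℝ) < (N:ℝ) := lt_trans (div_pos hba hδ) hN
  set h : ℝ := (b - a) / N with hh
  have hh0 : 0 < h := div_pos hba hN0
  have hNh : (N:ℝ) * h = b - a := by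
    rw [hh, mul_div_cancel₀ _ hN0.ne']
  have hhδ : h < δ := by
    rw [hh, div_lt_iff₀ hN0]
    rw [div_lt_iff₀ hδ] at hN
    linarith [hN]
  set p : ℕ → ℝ := fun j => a + j * h with hp
  have hpmem : ∀ j ≤ N, p j ∈ Set.Icc a b := by
    intro j hj
    constructor
    · simp only [hp]
      nlinarith [Nat.cast_nonneg (α := ℝ) j, hh0.le]
    · have : (j:ℝ) ≤ N := Nat.cast_le.mpr hj
      simp only [hp]
      nlinarith
  refine ⟨N, f a, fun i => f (p (i.1+1)) - f (p i.1), fun i => p (i.1+1), ?_, ?_⟩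
  · intro i
    have h1 : p i.1 ≤ p (i.1+1) := by
      simp only [hp]
      push_cast
      nlinarith
    have := hf_mono (hpmem i.1 i.2.le) (hpmem (i.1+1) i.2) h1
    simp only []
    linarith
  · intro x hx
    have hxa : (0:ℝ) ≤ (x - a) / h := div_nonneg (by linarith [hx.1]) hh0.le
    set k : ℕ := min N ⌊(x - a) / h⌋₊ with hk
    have hkN : k ≤ N := min_le_left _ _
    have hkfl : k ≤ ⌊(x - a) / h⌋₊ := min_le_right _ _
    have hpk_le : p k ≤ x := by
      have h1 : (k:ℝ) ≤ (x - a) / h :=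
        le_trans (Nat.cast_le.mpr hkfl) (Nat.floor_le hxa)
      rw [le_div_iff₀ hh0] at h1
      simp only [hp]; linarith
    have hpk_mem : p k ∈ Set.Icc a b := hpmem k hkN
    have hfilter : (range N).filter (fun i => p (i+1) ≤ x) = range k := by
      ext i
      simp only [Finset.mem_filter, Finset.mem_range]
      constructor
      · rintro ⟨hiN, hple⟩
        have h1 : ((i+1 : ℕ):ℝ) ≤ (x - a) / h := by
          rw [le_div_iff₀ hh0]
          push_cast
          simp only [hp] at hple
          push_cast at hple
          linarith
        have h2 : i + 1 ≤ ⌊(x - a) / h⌋₊ := Nat.le_floor h1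
        omega
      · intro hik
        have hiN : i < N := lt_of_lt_of_le hik hkN
        refine ⟨hiN, ?_⟩
        have h1 : i + 1 ≤ ⌊(x - a) / h⌋₊ := le_trans hik hkfl
        have h2 : ((i+1:ℕ):ℝ) ≤ (x - a) / h :=
          le_trans (Nat.cast_le.mpr h1) (Nat.floor_le hxa)
        rw [le_div_iff₀ hh0] at h2
        push_cast at h2
        simp only [hp]
        push_cast
        linarith
    have hsum : ∑ i : Fin N, (f (p (i.1+1)) - f (p i.1)) * (if p (i.1+1) ≤ x then (1:ℝ) else 0)
        = f (p k) - f (p 0) := by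
      rw [Fin.sum_univ_eq_sum_range
        (fun i => (f (p (i+1)) - f (p i)) * (if p (i+1) ≤ x then (1:ℝ) else 0)) N]
      simp only [mul_ite, mul_one, mul_zero]
      rw [← Finset.sum_filter, hfilter, Finset.sum_range_sub (fun j => f (p j)) k]
    have hp0 : p 0 = a := by simp [hp]
    rw [hsum, hp0]
    have hd : dist x (p k) < δ := by
      rw [Real.dist_eq, abs_of_nonneg (by linarith)]
      rcases eq_or_lt_of_le hkN with hkeq | hklt
      · have : p k = b := by
          simp only [hp]
          rw [hkeq]
          linarith [hNh]
        rw [this]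
        linarith [hx.2]
      · have hkfl' : k = ⌊(x - a) / h⌋₊ := by omega
        have h1 : (x - a) / h < k + 1 := by
          rw [hkfl']
          exact Nat.lt_floor_add_one _
        rw [div_lt_iff₀ hh0] at h1
        simp only [hp]
        nlinarith
    have hlt : |f x - f (p k)| < ε := by
      have := hδf x hx (p k) hpk_mem hd
      rwa [Real.dist_eq] at this
    have hle : f (p k) ≤ f x := hf_mono hpk_mem hx hpk_le
    rw [abs_sub_lt_iff] at hlt ⊢
    constructor <;> linarith [hlt.1, hlt.2]
end

section
/- Let a < b be reals, let f : ℝ → ℝ be continuous on [a, b] and monotone nondecreasing on [a, b], and let ε > 0. Then there exist N : ℕ, a constant c₀ ∈ ℝ, nonnegative output weights c : Fin N → ℝ (c i ≥ 0 for all i), positive input weights s : Fin N → ℝ (s i > 0 for all i), and biases β : Fin N → ℝ, such that for every x ∈ [a, b], |f(x) - (c₀ + ∑ i, c i / (1 + exp(-(s i · x + β i))))| < ε. That is, any continuous monotone nondecreasing function on a compact interval can be uniformly approximated by a one-hidden-layer neural network with sigmoid activation and nonnegative weights. -/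
open Finset

private lemma sig_one_sub_le (e : ℝ) (he : 0 < e) : 1 - e ≤ 1 / (1 + e) := by
  rw [le_div_iff₀ (by linarith)]
  nlinarith

set_option maxHeartbeats 1000000 in
/-- One-dimensional monotone universal approximation: a continuous monotone
nondecreasing function on `[a, b]` is uniformly approximated within `ε` by a
one-hidden-layer sigmoid network with nonnegative output weights and positive
input weights. -/
theorem monotone_sigmoid_network_approx (a b : ℝ) (hab : a < b) (f : ℝ → ℝ)
    (hf_cont : ContinuousOn f (Set.Icc a b))
    (hf_mono : MonotoneOn f (Set.Icc a b))
    (ε : ℝ) (hε : 0 < ε) :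
    ∃ (N : ℕ) (c₀ : ℝ) (c : Fin N → ℝ) (s : Fin N → ℝ) (β : Fin N → ℝ),
      (∀ i, 0 ≤ c i) ∧ (∀ i, 0 < s i) ∧
      ∀ x ∈ Set.Icc a b,
        |f x - (c₀ + ∑ i, c i / (1 + Real.exp (-(s i * x + β i))))| < ε := by
  have huc : UniformContinuousOn f (Set.Icc a b) :=
    isCompact_Icc.uniformContinuousOn_of_continuous hf_cont
  rw [Metric.uniformContinuousOn_iff] at huc
  obtain ⟨δ, hδ0, hδf⟩ := huc (ε/4) (by linarith)
  obtain ⟨n0, hn0⟩ := exists_nat_gt ((b - a)/δ)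
  obtain ⟨n, hn⟩ : ∃ n : ℕ, n = n0 + 1 := ⟨_, rfl⟩
  have hnposℕ : 0 < n := by omega
  have hnpos : (0:ℝ) < n := by exact_mod_cast hnposℕ
  obtain ⟨h, hhdef⟩ : ∃ h : ℝ, h = (b - a)/n := ⟨_, rfl⟩
  have hh0 : 0 < h := hhdef ▸ div_pos (by linarith) hnpos
  have hnh : (n:ℝ) * h = b - a := by
    rw [hhdef]; field_simp
  have hhδ : h < δ := by
    rw [hhdef, div_lt_iff₀ hnpos]
    have h1 : b - a < δ * n0 := by
      rw [div_lt_iff₀ hδ0] at hn0; linarith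
    have h2 : (n0:ℝ) ≤ n := by rw [hn]; push_cast; linarith
    nlinarith
  obtain ⟨η, hηdef⟩ : ∃ η : ℝ, η = 1/((n:ℝ)+1) := ⟨_, rfl⟩
  have hη0 : 0 < η := by rw [hηdef]; positivity
  obtain ⟨s, hsdef⟩ : ∃ s : ℝ, s = max 1 (-(2/h) * Real.log η) := ⟨_, rfl⟩
  have hs1 : 1 ≤ s := hsdef ▸ le_max_left _ _
  have hs0 : 0 < s := lt_of_lt_of_le one_pos hs1
  have hexpη : Real.exp (-(s * (h/2))) ≤ η := by
    have h1 : -(2/h) * Real.log η ≤ s := hsdef ▸ le_max_right _ _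
    have key2 : -(2/h) * Real.log η * (h/2) = -Real.log η := by
      field_simp
    have h3 := mul_le_mul_of_nonneg_right h1 (half_pos hh0).le
    rw [key2] at h3
    have h2 : -(s * (h/2)) ≤ Real.log η := by linarith
    calc Real.exp (-(s * (h/2))) ≤ Real.exp (Real.log η) := Real.exp_le_exp.mpr h2
      _ = η := Real.exp_log hη0
  -- nodes and coefficients
  obtain ⟨t, htdef⟩ : ∃ t : ℕ → ℝ, t = fun j : ℕ => a + ((j:ℝ)+1)*h := ⟨_, rfl⟩
  obtain ⟨g, hgdef⟩ : ∃ g : ℕ → ℝ, g = fun j : ℕ => f (a + (j:ℝ)*h) := ⟨_, rfl⟩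
  obtain ⟨cc, hccdef⟩ : ∃ cc : ℕ → ℝ, cc = fun j => g (j+1) - g j := ⟨_, rfl⟩
  have hmem : ∀ r : ℝ, 0 ≤ r → r ≤ (n:ℝ) → a + r*h ∈ Set.Icc a b := by
    intro r h0 h1
    constructor
    · nlinarith
    · nlinarith
  have hgval : ∀ j : ℕ, g j = f (a + (j:ℝ)*h) := fun j => by rw [hgdef]
  have hgsucc : ∀ j : ℕ, g (j+1) = f (a + ((j:ℝ)+1)*h) := by
    intro j; rw [hgdef]; push_cast; ring_nf
  have hjmem : ∀ j : ℕ, j ≤ n → a + (j:ℝ)*h ∈ Set.Icc a b := by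
    intro j hj
    exact hmem _ (by positivity) (by exact_mod_cast hj)
  have hjmem1 : ∀ j : ℕ, j < n → a + ((j:ℝ)+1)*h ∈ Set.Icc a b := by
    intro j hj
    refine hmem _ (by positivity) ?_
    have : (j:ℝ)+1 ≤ (n:ℝ) := by exact_mod_cast hj
    linarith
  have hccnn : ∀ j : ℕ, j < n → 0 ≤ cc j := by
    intro j hj
    have := hf_mono (hjmem j hj.le) (hjmem1 j hj) (by nlinarith)
    rw [hccdef]; simp only
    rw [hgsucc, hgval]; linarith
  have hccsmall : ∀ j : ℕ, j < n → cc j ≤ ε/4 := by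
    intro j hj
    have hd : dist (a + ((j:ℝ)+1)*h) (a + (j:ℝ)*h) < δ := by
      rw [Real.dist_eq]
      have e : a + ((j:ℝ)+1)*h - (a + (j:ℝ)*h) = h := by ring
      rw [e, abs_of_pos hh0]; exact hhδ
    have h2 := hδf _ (hjmem1 j hj) _ (hjmem j hj.le) hd
    rw [Real.dist_eq] at h2
    have h3 := le_abs_self (f (a + ((j:ℝ)+1)*h) - f (a + (j:ℝ)*h))
    rw [hccdef]; simp only
    rw [hgsucc, hgval]; linarith
  refine ⟨n, f a, fun j => cc j, fun _ => s, fun j => -(s * t j), fun j => hccnn j j.isLt,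
    fun _ => hs0, ?_⟩
  intro x hx
  obtain ⟨hax, hxb⟩ := hx
  obtain ⟨i, hidef⟩ : ∃ i : ℕ, i = ⌊(x-a)/h⌋₊ := ⟨_, rfl⟩
  have hxa0 : 0 ≤ (x-a)/h := div_nonneg (by linarith) hh0.le
  have hi_le : (i:ℝ)*h ≤ x - a := by
    have h1 : (i:ℝ) ≤ (x-a)/h := hidef ▸ Nat.floor_le hxa0
    have h2 : ((x-a)/h)*h = x - a := by field_simp
    nlinarith
  have hi_lt : x - a < ((i:ℝ)+1)*h := by
    have h1 : (x-a)/h < (i:ℝ)+1 := by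
      rw [hidef]; exact_mod_cast Nat.lt_floor_add_one ((x-a)/h)
    have h2 : ((x-a)/h)*h = x - a := by field_simp
    nlinarith
  have hi_n : i ≤ n := by
    have h1 : (x-a)/h ≤ (n:ℝ) := by
      rw [div_le_iff₀ hh0]; linarith
    rw [hidef]
    calc ⌊(x-a)/h⌋₊ ≤ ⌊(n:ℝ)⌋₊ := Nat.floor_le_floor h1
      _ = n := Nat.floor_natCast n
  -- condition: t j ≤ x ↔ j < i
  have hcond : ∀ j : ℕ, j < n → (t j ≤ x ↔ j < i) := by
    intro j _
    rw [htdef]; simp only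
    constructor
    · intro hj
      have h1 : ((j:ℝ)+1) ≤ (x-a)/h := by
        rw [le_div_iff₀ hh0]; linarith
      have h2 : j+1 ≤ i := by
        rw [hidef, Nat.le_floor_iff hxa0]; push_cast; linarith
      omega
    · intro hj
      have h2 : j+1 ≤ i := hj
      have h1 : ((j:ℝ))+1 ≤ (i:ℝ) := by exact_mod_cast h2
      have h3 : ((j:ℝ)+1)*h ≤ (i:ℝ)*h := mul_le_mul_of_nonneg_right h1 hh0.le
      linarith
  -- telescoping identity
  have htel : f (a + (i:ℝ)*h) - f a = ∑ j : Fin n, (if t (j:ℕ) ≤ x then cc (j:ℕ) else 0) := by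
    rw [Fin.sum_univ_eq_sum_range (fun j => if t j ≤ x then cc j else 0) n]
    have hcongr : ∑ j ∈ range n, (if t j ≤ x then cc j else 0)
        = ∑ j ∈ range n, (if j < i then cc j else 0) := by
      apply Finset.sum_congr rfl
      intro j hj
      rw [Finset.mem_range] at hj
      have hiff := hcond j hj
      by_cases hc : t j ≤ x
      · rw [if_pos hc, if_pos (hiff.mp hc)]
      · rw [if_neg hc, if_neg (fun hlt => hc (hiff.mpr hlt))]
    rw [hcongr, ← Finset.sum_filter]
    have hfil : (range n).filter (fun j => j < i) = range i := by
      ext k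
      simp only [Finset.mem_filter, Finset.mem_range]
      omega
    rw [hfil, hccdef]
    rw [Finset.sum_range_sub g i, hgval, hgval]
    norm_num
  -- sigmoid values
  obtain ⟨sg, hsgdef⟩ : ∃ sg : ℕ → ℝ,
      sg = fun j => 1 / (1 + Real.exp (-(s * x + -(s * t j)))) := ⟨_, rfl⟩
  have hsgval : ∀ j : ℕ, sg j = 1 / (1 + Real.exp (-(s * x + -(s * t j)))) :=
    fun j => by rw [hsgdef]
  have hsgpos : ∀ j : ℕ, 0 < sg j := by
    intro j
    rw [hsgval]
    have := Real.exp_pos (-(s * x + -(s * t j)))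
    positivity
  have hsgle : ∀ j : ℕ, sg j ≤ 1 := by
    intro j
    rw [hsgval]
    have he := Real.exp_pos (-(s * x + -(s * t j)))
    rw [div_le_one (by linarith)]
    linarith
  -- far bounds
  have hfar_hi : ∀ j : ℕ, h/2 ≤ x - t j → 1 - sg j ≤ η := by
    intro j hj
    have hmul : s * (h/2) ≤ s * (x - t j) := mul_le_mul_of_nonneg_left hj hs0.le
    have e1 : s * (x - t j) = s * x - s * t j := by ring
    have harg : -(s * x + -(s * t j)) ≤ -(s * (h/2)) := by linarith
    have he : Real.exp (-(s * x + -(s * t j))) ≤ η :=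
      le_trans (Real.exp_le_exp.mpr harg) hexpη
    have hepos := Real.exp_pos (-(s * x + -(s * t j)))
    have h1e : (0:ℝ) < 1 + Real.exp (-(s * x + -(s * t j))) := by linarith
    have hkey : 1 - Real.exp (-(s * x + -(s * t j)))
        ≤ 1 / (1 + Real.exp (-(s * x + -(s * t j)))) := sig_one_sub_le _ hepos
    rw [hsgval]
    linarith
  have hfar_lo : ∀ j : ℕ, x - t j ≤ -(h/2) → sg j ≤ η := by
    intro j hj
    have hmul : s * (x - t j) ≤ s * (-(h/2)) := mul_le_mul_of_nonneg_left hj hs0.le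
    have e1 : s * (x - t j) = s * x - s * t j := by ring
    have e2 : s * (-(h/2)) = -(s * (h/2)) := by ring
    have harg : s * x + -(s * t j) ≤ -(s * (h/2)) := by linarith
    have he : Real.exp (s * x + -(s * t j)) ≤ η :=
      le_trans (Real.exp_le_exp.mpr harg) hexpη
    have hepos := Real.exp_pos (-(s * x + -(s * t j)))
    have h1 : sg j ≤ 1 / Real.exp (-(s * x + -(s * t j))) := by
      rw [hsgval]
      exact one_div_le_one_div_of_le hepos (by linarith)
    have h2 : 1 / Real.exp (-(s * x + -(s * t j))) = Real.exp (s * x + -(s * t j)) := by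
      rw [Real.exp_neg]; field_simp
    rw [h2] at h1
    linarith
  -- per-term bound
  have hterm : ∀ j : Fin n,
      |(if t (j:ℕ) ≤ x then cc (j:ℕ) else 0) - cc (j:ℕ) * sg (j:ℕ)|
        ≤ if |x - t (j:ℕ)| < h/2 then cc (j:ℕ) else cc (j:ℕ) * η := by
    intro j
    have hcnn := hccnn j j.isLt
    have hp := hsgpos (j:ℕ)
    have hl := hsgle (j:ℕ)
    by_cases hnear : |x - t (j:ℕ)| < h/2
    · rw [if_pos hnear]
      by_cases hc : t (j:ℕ) ≤ x
      · rw [if_pos hc]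
        have e : cc (j:ℕ) - cc (j:ℕ) * sg (j:ℕ) = cc (j:ℕ) * (1 - sg (j:ℕ)) := by ring
        rw [e, abs_of_nonneg (by nlinarith)]
        nlinarith
      · rw [if_neg hc, abs_of_nonpos (by nlinarith)]
        nlinarith
    · rw [if_neg hnear]
      push_neg at hnear
      by_cases hc : t (j:ℕ) ≤ x
      · have hfar : h/2 ≤ x - t (j:ℕ) := by
          rcases abs_cases (x - t (j:ℕ)) with ⟨he, _⟩ | ⟨he, hneg⟩
          · linarith
          · linarith
        rw [if_pos hc]
        have e : cc (j:ℕ) - cc (j:ℕ) * sg (j:ℕ) = cc (j:ℕ) * (1 - sg (j:ℕ)) := by ring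
        rw [e, abs_of_nonneg (by nlinarith)]
        have := hfar_hi (j:ℕ) hfar
        nlinarith
      · push_neg at hc
        have hfar : x - t (j:ℕ) ≤ -(h/2) := by
          rcases abs_cases (x - t (j:ℕ)) with ⟨he, _⟩ | ⟨he, hneg⟩
          · linarith
          · linarith
        rw [if_neg (not_le.mpr hc), abs_of_nonpos (by nlinarith)]
        have := hfar_lo (j:ℕ) hfar
        nlinarith
  -- near set has at most one element
  have hnearcard : (univ.filter (fun j : Fin n => |x - t (j:ℕ)| < h/2)).card ≤ 1 := by
    rw [Finset.card_le_one]
    intro j hj k hk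
    rw [Finset.mem_filter] at hj hk
    have h1 : |t (j:ℕ) - t (k:ℕ)| < h := by
      calc |t (j:ℕ) - t (k:ℕ)| ≤ |t (j:ℕ) - x| + |x - t (k:ℕ)| := abs_sub_le _ _ _
        _ = |x - t (j:ℕ)| + |x - t (k:ℕ)| := by rw [abs_sub_comm]
        _ < h := by linarith [hj.2, hk.2]
    have h2 : t (j:ℕ) - t (k:ℕ) = (((j:ℕ):ℝ) - ((k:ℕ):ℝ)) * h := by
      rw [htdef]; simp only; ring
    rw [h2, abs_mul, abs_of_pos hh0] at h1
    have h3 : |((j:ℕ):ℝ) - ((k:ℕ):ℝ)| < 1 := by nlinarith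
    rcases abs_lt.mp h3 with ⟨h4, h5⟩
    have h6 : (j:ℕ) < (k:ℕ) + 1 := by exact_mod_cast (by linarith : ((j:ℕ):ℝ) < ((k:ℕ):ℝ) + 1)
    have h7 : (k:ℕ) < (j:ℕ) + 1 := by exact_mod_cast (by linarith : ((k:ℕ):ℝ) < ((j:ℕ):ℝ) + 1)
    exact Fin.ext (by omega)
  -- main estimate
  have hmain : |f x - (f a + ∑ j : Fin n, cc (j:ℕ) * sg (j:ℕ))| < ε := by
    have hdecomp : f x - (f a + ∑ j : Fin n, cc (j:ℕ) * sg (j:ℕ))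
        = (f x - f (a + (i:ℝ)*h))
          + ∑ j : Fin n, ((if t (j:ℕ) ≤ x then cc (j:ℕ) else 0) - cc (j:ℕ) * sg (j:ℕ)) := by
      rw [Finset.sum_sub_distrib, ← htel]; ring
    rw [hdecomp]
    have hA : |f x - f (a + (i:ℝ)*h)| < ε/4 := by
      have hmem' : a + (i:ℝ)*h ∈ Set.Icc a b := hjmem i hi_n
      have hd : dist x (a + (i:ℝ)*h) < δ := by
        rw [Real.dist_eq, abs_of_nonneg (by linarith)]
        linarith
      have := hδf x ⟨hax, hxb⟩ _ hmem' hd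
      rwa [Real.dist_eq] at this
    have hB : |∑ j : Fin n, ((if t (j:ℕ) ≤ x then cc (j:ℕ) else 0) - cc (j:ℕ) * sg (j:ℕ))|
        ≤ ε/4 + ε/4 := by
      calc |∑ j : Fin n, ((if t (j:ℕ) ≤ x then cc (j:ℕ) else 0) - cc (j:ℕ) * sg (j:ℕ))|
          ≤ ∑ j : Fin n, |(if t (j:ℕ) ≤ x then cc (j:ℕ) else 0) - cc (j:ℕ) * sg (j:ℕ)| :=
            Finset.abs_sum_le_sum_abs _ _
        _ ≤ ∑ j : Fin n, (if |x - t (j:ℕ)| < h/2 then cc (j:ℕ) else cc (j:ℕ) * η) :=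
            Finset.sum_le_sum (fun j _ => hterm j)
        _ = ∑ j ∈ univ.filter (fun j : Fin n => |x - t (j:ℕ)| < h/2), cc (j:ℕ)
            + ∑ j ∈ univ.filter (fun j : Fin n => ¬ |x - t (j:ℕ)| < h/2), cc (j:ℕ) * η :=
            Finset.sum_ite _ _
        _ ≤ ε/4 + ε/4 := by
            have hB1 : ∑ j ∈ univ.filter (fun j : Fin n => |x - t (j:ℕ)| < h/2), cc (j:ℕ)
                ≤ ε/4 := by
              calc ∑ j ∈ univ.filter (fun j : Fin n => |x - t (j:ℕ)| < h/2), cc (j:ℕ)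
                  ≤ (univ.filter (fun j : Fin n => |x - t (j:ℕ)| < h/2)).card • (ε/4) :=
                    Finset.sum_le_card_nsmul _ _ _ (fun j _ => hccsmall j j.isLt)
                _ ≤ 1 • (ε/4) := nsmul_le_nsmul_left (by linarith) hnearcard
                _ = ε/4 := one_nsmul _
            have hB2 : ∑ j ∈ univ.filter (fun j : Fin n => ¬ |x - t (j:ℕ)| < h/2),
                cc (j:ℕ) * η ≤ ε/4 := by
              have heach : ∀ j ∈ univ.filter (fun j : Fin n => ¬ |x - t (j:ℕ)| < h/2),
                  cc (j:ℕ) * η ≤ (ε/4) * η := by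
                intro j _
                have := hccsmall j j.isLt
                nlinarith
              calc ∑ j ∈ univ.filter (fun j : Fin n => ¬ |x - t (j:ℕ)| < h/2), cc (j:ℕ) * η
                  ≤ (univ.filter (fun j : Fin n => ¬ |x - t (j:ℕ)| < h/2)).card • ((ε/4) * η) :=
                    Finset.sum_le_card_nsmul _ _ _ heach
                _ ≤ n • ((ε/4) * η) := by
                    refine nsmul_le_nsmul_left (by positivity) ?_
                    calc (univ.filter (fun j : Fin n => ¬ |x - t (j:ℕ)| < h/2)).card
                        ≤ (univ : Finset (Fin n)).card := Finset.card_filter_le _ _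
                      _ = n := by simp
                _ = (n:ℝ) * ((ε/4) * η) := by rw [nsmul_eq_mul]
                _ ≤ ε/4 := by
                    have hnη : (n:ℝ) * η ≤ 1 := by
                      rw [hηdef, mul_one_div, div_le_one (by positivity)]
                      linarith
                    nlinarith
            linarith
    calc |f x - f (a + (i:ℝ)*h)
          + ∑ j : Fin n, ((if t (j:ℕ) ≤ x then cc (j:ℕ) else 0) - cc (j:ℕ) * sg (j:ℕ))|
        ≤ |f x - f (a + (i:ℝ)*h)|
          + |∑ j : Fin n, ((if t (j:ℕ) ≤ x then cc (j:ℕ) else 0) - cc (j:ℕ) * sg (j:ℕ))| :=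
          abs_add_le _ _
      _ < ε/4 + (ε/4 + ε/4) := by linarith
      _ < ε := by linarith
  -- match goal shape
  have hgoal : ∀ j : Fin n, cc (j:ℕ) / (1 + Real.exp (-(s * x + -(s * t (j:ℕ)))))
      = cc (j:ℕ) * sg (j:ℕ) := by
    intro j
    rw [hsgval]
    ring
  calc |f x - (f a + ∑ j : Fin n, cc (j:ℕ) / (1 + Real.exp (-(s * x + -(s * t (j:ℕ))))))|
      = |f x - (f a + ∑ j : Fin n, cc (j:ℕ) * sg (j:ℕ))| := by
        rw [Finset.sum_congr rfl (fun j _ => hgoal j)]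
    _ < ε := hmain
end
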